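/- arXiv:1505.04166 — 2 statements merged into one kernel-verified Lean document; each statement's English description precedes it below -/
import Mathlib

section
/- (Weighted flat Bochner formula.) Let ρ : ℝⁿ → ℝ be smooth (C³) and Δ_ρ f = Δf − ⟨∇ρ, ∇f⟩. Then for every smooth (C³) function f : ℝⁿ → ℝ, the iterated carré du champ satisfies Γ₂(Δ_ρ, f, f) := (1/2)Δ_ρ(‖∇f‖²) − ⟨∇f, ∇(Δ_ρ f)⟩ = ‖Hess f‖² + Hess ρ(∇f, ∇f) pointwise, where ‖Hess f‖² is the squared Frobenius norm of the Hessian of f and Hess ρ(∇f,∇f) = Σ_{i,j} (∂²ρ/∂x_i∂x_j)(∂f/∂x_i)(∂f/∂x_j). -/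
/-!
In coordinates, `Γ₂(Δ_ρ, f, f)` splits into a flat part and a drift part. The flat part is
Bochner's identity `Δ‖∇f‖² = 2‖Hess f‖² + 2⟨∇f, ∇Δf⟩`, which follows from the Leibniz rule
for `Δ` and the commutation `∂ⱼΔ = Δ∂ⱼ` of third derivatives. For the drift part,
`∇⟨∇u, ∇v⟩ = Hess u ∇v + Hess v ∇u`, so
`⟨∇f, ∇⟨∇ρ, ∇f⟩⟩ − ½⟨∇ρ, ∇‖∇f‖²⟩ = Hess ρ(∇f, ∇f) + Hess f(∇f, ∇ρ) − Hess f(∇ρ, ∇f)`,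
and the last two terms cancel by the symmetry of `Hess f`.
-/

open scoped RealInnerProductSpace

/-- The Euclidean Laplacian: the trace of the Hessian, i.e. the sum of pure second
partial derivatives. -/
noncomputable def eLap {n : ℕ} (f : EuclideanSpace ℝ (Fin n) → ℝ)
    (x : EuclideanSpace ℝ (Fin n)) : ℝ :=
  ∑ i, fderiv ℝ (fun y => fderiv ℝ f y (EuclideanSpace.single i 1)) x (EuclideanSpace.single i 1)

/-- The carré du champ of an operator `L`: `Γ(L,u,v) = (1/2)(L(uv) − (Lu)v − u(Lv))`. -/
noncomputable def carre {n : ℕ}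
    (L : (EuclideanSpace ℝ (Fin n) → ℝ) → EuclideanSpace ℝ (Fin n) → ℝ)
    (u v : EuclideanSpace ℝ (Fin n) → ℝ) (z : EuclideanSpace ℝ (Fin n)) : ℝ :=
  (1/2) * (L (fun w => u w * v w) z - L u z * v z - u z * L v z)

/-- The iterated carré du champ (diagonal):
`Γ₂(L,f,f) = (1/2)(L(Γ(L,f,f)) − 2Γ(L,Lf,f))`. -/
noncomputable def gamma2 {n : ℕ}
    (L : (EuclideanSpace ℝ (Fin n) → ℝ) → EuclideanSpace ℝ (Fin n) → ℝ)
    (f : EuclideanSpace ℝ (Fin n) → ℝ) (z : EuclideanSpace ℝ (Fin n)) : ℝ :=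
  (1/2) * (L (carre L f f) z - 2 * carre L (L f) f z)

/-- The weighted Laplacian `Δ_ρ f = Δf − ⟨∇ρ, ∇f⟩`. -/
noncomputable def wLap {n : ℕ} (ρ f : EuclideanSpace ℝ (Fin n) → ℝ)
    (z : EuclideanSpace ℝ (Fin n)) : ℝ :=
  eLap f z - ⟪gradient ρ z, gradient f z⟫

/-- The Hessian matrix of second partial derivatives. -/
noncomputable def hess {n : ℕ} (f : EuclideanSpace ℝ (Fin n) → ℝ)
    (z : EuclideanSpace ℝ (Fin n)) (i j : Fin n) : ℝ :=
  fderiv ℝ (fun y => fderiv ℝ f y (EuclideanSpace.single j 1)) z (EuclideanSpace.single i 1)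

/-- The test function `f_{x,y}(z) = (1/2)(d²(x,y) − d²(y,z) + d²(z,x))`. -/
noncomputable def testFn {n : ℕ} (x y z : EuclideanSpace ℝ (Fin n)) : ℝ :=
  (1/2) * (dist x y ^ 2 - dist y z ^ 2 + dist z x ^ 2)

/-- The coarse Ricci curvature of an operator `L`:
`Ric_L(x,y) = Γ₂(L, f_{x,y}, f_{x,y})(x)`. -/
noncomputable def cRic {n : ℕ}
    (L : (EuclideanSpace ℝ (Fin n) → ℝ) → EuclideanSpace ℝ (Fin n) → ℝ)
    (x y : EuclideanSpace ℝ (Fin n)) : ℝ :=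
  gamma2 L (testFn x y) x

section GradientCalculus

variable {F : Type*} [NormedAddCommGroup F] [InnerProductSpace ℝ F] [CompleteSpace F]
  {u v : F → ℝ} {x : F}

theorem gradient_fun_sub (hu : DifferentiableAt ℝ u x) (hv : DifferentiableAt ℝ v x) :
    gradient (fun y => u y - v y) x = gradient u x - gradient v x := by
  simp only [gradient, fderiv_fun_sub hu hv, map_sub]

theorem ContDiff.gradient {k m : WithTop ℕ∞} (hu : ContDiff ℝ k u) (hmk : m + 1 ≤ k) :
    ContDiff ℝ m (gradient u) :=
  (InnerProductSpace.toDual ℝ F).symm.contDiff.comp (hu.fderiv_right hmk)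

end GradientCalculus

section Euclidean

variable {n : ℕ}

local notation "E" => EuclideanSpace ℝ (Fin n)

noncomputable def partialDeriv (i : Fin n) (g : E → ℝ) : E → ℝ :=
  fun y => fderiv ℝ g y (EuclideanSpace.single i 1)

noncomputable def hessForm (g : E → ℝ) (z a b : E) : ℝ :=
  ∑ i, ∑ j, hess g z i j * a i * b j

variable {g u v : EuclideanSpace ℝ (Fin n) → ℝ} (i j : Fin n)

theorem contDiff_partialDeriv {k m : WithTop ℕ∞} (hg : ContDiff ℝ k g) (hmk : m + 1 ≤ k) :
    ContDiff ℝ m (partialDeriv i g) :=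
  (hg.fderiv_right hmk).clm_apply contDiff_const

theorem differentiable_partialDeriv (hg : ContDiff ℝ 2 g) : Differentiable ℝ (partialDeriv i g) :=
  (contDiff_partialDeriv i hg (m := 1) le_rfl).differentiable one_ne_zero

theorem partialDeriv_add (hu : Differentiable ℝ u) (hv : Differentiable ℝ v) :
    partialDeriv i (fun y => u y + v y) = fun y => partialDeriv i u y + partialDeriv i v y := by
  funext y
  simp only [partialDeriv, fderiv_fun_add (hu y) (hv y), add_apply]

theorem partialDeriv_mul (hu : Differentiable ℝ u) (hv : Differentiable ℝ v) :
    partialDeriv i (fun y => u y * v y)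
      = fun y => partialDeriv i u y * v y + u y * partialDeriv i v y := by
  funext y
  simp only [partialDeriv, fderiv_fun_mul (hu y) (hv y), add_apply,
    smul_apply, smul_eq_mul]
  ring

theorem partialDeriv_sum {ι : Type*} (s : Finset ι) {G : ι → E → ℝ}
    (hG : ∀ k ∈ s, Differentiable ℝ (G k)) :
    partialDeriv i (fun y => ∑ k ∈ s, G k y) = fun y => ∑ k ∈ s, partialDeriv i (G k) y := by
  funext y
  simp only [partialDeriv, fderiv_fun_sum fun k hk => hG k hk y, sum_apply]

theorem partialDeriv_comm (hg : ContDiff ℝ 2 g) :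
    partialDeriv i (partialDeriv j g) = partialDeriv j (partialDeriv i g) := by
  funext x
  have hd : DifferentiableAt ℝ (fderiv ℝ g) x :=
    ((hg.fderiv_right (m := 1) le_rfl).differentiable one_ne_zero).differentiableAt
  have second : ∀ a b : Fin n, partialDeriv a (partialDeriv b g) x
      = fderiv ℝ (fderiv ℝ g) x (EuclideanSpace.single a 1) (EuclideanSpace.single b 1) := by
    intro a b
    unfold partialDeriv
    rw [fderiv_clm_apply hd (differentiableAt_const _)]
    simp
  rw [second, second, hg.contDiffAt.isSymmSndFDerivAt (by simp)]

theorem gradient_apply (x : E) : gradient g x i = partialDeriv i g x := by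
  rw [partialDeriv, ← inner_gradient_left, EuclideanSpace.inner_single_right]
  simp

theorem inner_gradient_gradient (x : E) :
    ⟪gradient u x, gradient v x⟫ = ∑ i, partialDeriv i u x * partialDeriv i v x := by
  simp only [PiLp.inner_apply, gradient_apply, RCLike.inner_apply, conj_trivial, mul_comm]

theorem eLap_eq_sum :
    eLap g = fun x => ∑ i, partialDeriv i (partialDeriv i g) x := rfl

theorem hess_eq_partialDeriv (z : E) :
    hess g z i j = partialDeriv i (partialDeriv j g) z := rfl

theorem contDiff_eLap {m : WithTop ℕ∞} (hg : ContDiff ℝ (m + 2) g) : ContDiff ℝ m (eLap g) := by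
  rw [eLap_eq_sum]
  refine ContDiff.sum fun i _ => contDiff_partialDeriv i (contDiff_partialDeriv i hg ?_) le_rfl
  rw [add_assoc]
  norm_num

theorem partialDeriv_eLap (hg : ContDiff ℝ 3 g) :
    partialDeriv j (eLap g) = eLap (partialDeriv j g) := by
  have hg' : ∀ i, ContDiff ℝ 2 (partialDeriv i g) := fun i => contDiff_partialDeriv i hg (by norm_num)
  simp only [eLap_eq_sum]
  rw [partialDeriv_sum j _ fun i _ => differentiable_partialDeriv i (hg' i)]
  funext x
  refine Finset.sum_congr rfl fun i _ => ?_
  rw [partialDeriv_comm j i (hg' i), partialDeriv_comm j i (hg.of_le (by norm_num))]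

theorem eLap_sum {ι : Type*} (s : Finset ι) {G : ι → E → ℝ} (hG : ∀ k ∈ s, ContDiff ℝ 2 (G k)) :
    eLap (fun x => ∑ k ∈ s, G k x) = fun x => ∑ k ∈ s, eLap (G k) x := by
  have hG1 : ∀ k ∈ s, Differentiable ℝ (G k) := fun k hk => (hG k hk).differentiable (by norm_num)
  funext x
  simp only [eLap_eq_sum, partialDeriv_sum _ s hG1,
    partialDeriv_sum _ s fun k hk => differentiable_partialDeriv _ (hG k hk)]
  exact Finset.sum_comm

theorem eLap_mul (hu : ContDiff ℝ 2 u) (hv : ContDiff ℝ 2 v) :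
    eLap (fun x => u x * v x) = fun x =>
      eLap u x * v x + 2 * ∑ i, partialDeriv i u x * partialDeriv i v x + u x * eLap v x := by
  have hu1 : Differentiable ℝ u := hu.differentiable (by norm_num)
  have hv1 : Differentiable ℝ v := hv.differentiable (by norm_num)
  have hu2 := fun i => differentiable_partialDeriv i hu
  have hv2 := fun i => differentiable_partialDeriv i hv
  have leibniz : ∀ i, partialDeriv i (partialDeriv i fun x => u x * v x) = fun x =>
      partialDeriv i (partialDeriv i u) x * v x + 2 * (partialDeriv i u x * partialDeriv i v x)
        + u x * partialDeriv i (partialDeriv i v) x := by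
    intro i
    rw [partialDeriv_mul i hu1 hv1, partialDeriv_add i ((hu2 i).fun_mul hv1) (hu1.fun_mul (hv2 i)),
      partialDeriv_mul i (hu2 i) hv1, partialDeriv_mul i hu1 (hv2 i)]
    funext x
    ring
  funext x
  simp only [eLap_eq_sum, leibniz, Finset.sum_add_distrib, Finset.mul_sum, Finset.sum_mul]

theorem eLap_norm_gradient_sq (hg : ContDiff ℝ 3 g) (z : E) :
    eLap (fun w => ‖gradient g w‖ ^ 2) z
      = 2 * ∑ i, ∑ j, hess g z i j ^ 2 + 2 * ⟪gradient g z, gradient (eLap g) z⟫ := by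
  have hg' : ∀ j, ContDiff ℝ 2 (partialDeriv j g) := fun j => contDiff_partialDeriv j hg (by norm_num)
  have hnorm : (fun w => ‖gradient g w‖ ^ 2)
      = fun w => ∑ j, partialDeriv j g w * partialDeriv j g w := by
    funext w
    rw [← real_inner_self_eq_norm_sq, inner_gradient_gradient]
  rw [hnorm, eLap_sum _ fun j _ => (hg' j).mul (hg' j)]
  simp only [eLap_mul (hg' _) (hg' _), ← partialDeriv_eLap _ hg, inner_gradient_gradient,
    hess_eq_partialDeriv]
  rw [Finset.sum_comm (f := fun i j => partialDeriv i (partialDeriv j g) z ^ 2), Finset.mul_sum,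
    Finset.mul_sum, ← Finset.sum_add_distrib]
  refine Finset.sum_congr rfl fun j _ => ?_
  simp only [sq]
  ring

theorem hessForm_comm (hg : ContDiff ℝ 2 g) (z a b : E) : hessForm g z a b = hessForm g z b a := by
  rw [hessForm, hessForm, Finset.sum_comm]
  refine Finset.sum_congr rfl fun i _ => Finset.sum_congr rfl fun j _ => ?_
  rw [hess_eq_partialDeriv, hess_eq_partialDeriv, partialDeriv_comm i j hg]
  ring

theorem partialDeriv_inner_gradient (hu : ContDiff ℝ 2 u) (hv : ContDiff ℝ 2 v) :
    partialDeriv i (fun x => ⟪gradient u x, gradient v x⟫) = fun x =>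
      ∑ j, (hess u x i j * partialDeriv j v x + partialDeriv j u x * hess v x i j) := by
  have hu' := fun j => differentiable_partialDeriv j hu
  have hv' := fun j => differentiable_partialDeriv j hv
  simp only [inner_gradient_gradient]
  rw [partialDeriv_sum i _ fun j _ => (hu' j).fun_mul (hv' j)]
  simp only [partialDeriv_mul i (hu' _) (hv' _), hess_eq_partialDeriv]

theorem inner_gradient_inner_gradient (w : E → ℝ) (hu : ContDiff ℝ 2 u) (hv : ContDiff ℝ 2 v)
    (z : E) :
    ⟪gradient w z, gradient (fun x => ⟪gradient u x, gradient v x⟫) z⟫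
      = hessForm u z (gradient w z) (gradient v z) + hessForm v z (gradient w z) (gradient u z) := by
  rw [inner_gradient_gradient]
  simp only [partialDeriv_inner_gradient _ hu hv, hessForm,
    gradient_apply, Finset.mul_sum, ← Finset.sum_add_distrib]
  refine Finset.sum_congr rfl fun i _ => Finset.sum_congr rfl fun j _ => ?_
  ring

end Euclidean

/-- **weighted flat Bochner formula.** For C³ weight `ρ` and C³ function
`f`, `Γ₂(Δ_ρ,f,f) = (1/2)Δ_ρ(‖∇f‖²) − ⟨∇f, ∇(Δ_ρ f)⟩` equals
`‖Hess f‖² + Hess ρ(∇f, ∇f)` pointwise. -/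
theorem weighted_flat_bochner_formula
    {n : ℕ} (ρ f : EuclideanSpace ℝ (Fin n) → ℝ)
    (hρ : ContDiff ℝ 3 ρ) (hf : ContDiff ℝ 3 f) (z : EuclideanSpace ℝ (Fin n)) :
    (1/2 : ℝ) * wLap ρ (fun w => ‖gradient f w‖ ^ 2) z
        - ⟪gradient f z, gradient (wLap ρ f) z⟫
      = (∑ i, ∑ j, hess f z i j ^ 2)
        + ∑ i, ∑ j, hess ρ z i j * fderiv ℝ f z (EuclideanSpace.single i 1)
            * fderiv ℝ f z (EuclideanSpace.single j 1) := by
  have hf2 : ContDiff ℝ 2 f := hf.of_le (by norm_num)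
  have hρ2 : ContDiff ℝ 2 ρ := hρ.of_le (by norm_num)
  have hgrad : gradient (wLap ρ f) z
      = gradient (eLap f) z - gradient (fun w => ⟪gradient ρ w, gradient f w⟫) z :=
    gradient_fun_sub ((contDiff_eLap (m := 1) hf).differentiable one_ne_zero z)
      (((hρ2.gradient le_rfl).inner ℝ (hf2.gradient le_rfl)).differentiable one_ne_zero z)
  have hnorm : (fun w => ‖gradient f w‖ ^ 2) = fun w => ⟪gradient f w, gradient f w⟫ :=
    funext fun w => (real_inner_self_eq_norm_sq _).symm
  have hweight : ∑ i, ∑ j, hess ρ z i j * fderiv ℝ f z (EuclideanSpace.single i 1)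
      * fderiv ℝ f z (EuclideanSpace.single j 1) = hessForm ρ z (gradient f z) (gradient f z) := by
    simp only [hessForm, gradient_apply]
    rfl
  rw [hgrad, inner_sub_right, wLap, eLap_norm_gradient_sq hf, hnorm,
    inner_gradient_inner_gradient _ hf2 hf2, inner_gradient_inner_gradient _ hρ2 hf2,
    hessForm_comm hf2 z (gradient ρ z), hweight]
  ring
end

section
/- Let ρ : ℝⁿ → ℝ be smooth (C³) and Δ_ρ f = Δf − ⟨∇ρ, ∇f⟩. Then the coarse Ricci curvature of Δ_ρ is given explicitly by Ric_{Δ_ρ}(x,y) := Γ₂(Δ_ρ, f_{x,y}, f_{x,y})(x) = Hess ρ_x(y−x, y−x) for all x, y ∈ ℝⁿ, where Hess ρ_x(v,v) = Σ_{i,j} (∂²ρ/∂x_i∂x_j)(x) v_i v_j. -/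
open scoped RealInnerProductSpace

/-! `f_{x,y}(z) = ⟪y - x, z⟫ + c` is affine. Since `u ↦ ⟪∇ρ, ∇u⟫` is a derivation, `Δ_ρ` has the
carré du champ of `Δ`, `Γ(u, w) = ⟪∇u, ∇w⟫`. Hence `Γ(f, f) = ‖y - x‖²` is constant,
`Δ_ρ f = -∂_{y-x} ρ`, and `Γ₂(f, f) = -Γ(Δ_ρ f, f) = ∂_{y-x} ∂_{y-x} ρ`. -/

section Calculus

variable {F : Type*} [NormedAddCommGroup F] [NormedSpace ℝ F]

lemma fderiv_mul_apply {u w : F → ℝ} {z : F} (hu : DifferentiableAt ℝ u z)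
    (hw : DifferentiableAt ℝ w z) (e : F) :
    fderiv ℝ (fun y => u y * w y) z e = u z * fderiv ℝ w z e + w z * fderiv ℝ u z e := by
  rw [fderiv_fun_mul hu hw]
  rfl

lemma differentiable_fderiv_apply {u : F → ℝ} (hu : ContDiff ℝ 2 u) (e : F) :
    Differentiable ℝ (fun y => fderiv ℝ u y e) :=
  ((hu.fderiv_right (m := 1) (by norm_num)).clm_apply contDiff_const).differentiable one_ne_zero

end Calculus

section InnerProductSpace

variable {F : Type*} [NormedAddCommGroup F] [InnerProductSpace ℝ F]

lemma fderiv_inner_add_const (v : F) (c : ℝ) (z : F) :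
    fderiv ℝ (fun w => ⟪v, w⟫ + c) z = innerSL ℝ v :=
  ((innerSL ℝ v).hasFDerivAt.add_const c).fderiv

variable [CompleteSpace F]

lemma gradient_inner_add_const (v : F) (c : ℝ) (z : F) :
    gradient (fun w => ⟪v, w⟫ + c) z = v :=
  ext_inner_right ℝ fun w => by rw [inner_gradient_left, fderiv_inner_add_const]; rfl

end InnerProductSpace

section WeightedLaplacian

variable {n : ℕ}

local notation "E" => EuclideanSpace ℝ (Fin n)

lemma ContinuousLinearMap.apply_eq_sum_single (T : E →L[ℝ] ℝ) (v : E) :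
    T v = ∑ i, v i * T (EuclideanSpace.single i 1) := by
  conv_lhs => rw [← (EuclideanSpace.basisFun (Fin n) ℝ).sum_repr v]
  simp [map_sum]

lemma inner_gradient_eq_sum (u w : E → ℝ) (z : E) :
    ⟪gradient u z, gradient w z⟫ = ∑ i, fderiv ℝ u z (EuclideanSpace.single i 1) *
      fderiv ℝ w z (EuclideanSpace.single i 1) := by
  simp only [← inner_gradient_left, PiLp.inner_apply]
  simp [mul_comm]

lemma wLap_eq_eLap_sub_fderiv (ρ u : E → ℝ) (z : E) :
    wLap ρ u z = eLap u z - fderiv ℝ u z (gradient ρ z) := by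
  rw [wLap, real_inner_comm, inner_gradient_left]

lemma eLap_mul_s7 {u w : E → ℝ} (hu : ContDiff ℝ 2 u) (hw : ContDiff ℝ 2 w) (z : E) :
    eLap (fun y => u y * w y) z =
      u z * eLap w z + w z * eLap u z + 2 * ⟪gradient u z, gradient w z⟫ := by
  have hu1 : Differentiable ℝ u := hu.differentiable (by norm_num)
  have hw1 : Differentiable ℝ w := hw.differentiable (by norm_num)
  have hterm : ∀ e : E,
      fderiv ℝ (fun y => fderiv ℝ (fun y => u y * w y) y e) z e =
        u z * fderiv ℝ (fun y => fderiv ℝ w y e) z e +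
          w z * fderiv ℝ (fun y => fderiv ℝ u y e) z e +
          2 * (fderiv ℝ u z e * fderiv ℝ w z e) := by
    intro e
    have hfirst : (fun y => fderiv ℝ (fun y => u y * w y) y e) =
        fun y => u y * fderiv ℝ w y e + w y * fderiv ℝ u y e :=
      funext fun y => fderiv_mul_apply (hu1 y) (hw1 y) e
    rw [hfirst, fderiv_fun_add ((hu1 z).fun_mul (differentiable_fderiv_apply hw e z))
      ((hw1 z).fun_mul (differentiable_fderiv_apply hu e z)), add_apply,
      fderiv_mul_apply (hu1 z) (differentiable_fderiv_apply hw e z),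
      fderiv_mul_apply (hw1 z) (differentiable_fderiv_apply hu e z)]
    ring
  simp only [eLap, hterm, Finset.sum_add_distrib, ← Finset.mul_sum, inner_gradient_eq_sum]

lemma wLap_mul (ρ : E → ℝ) {u w : E → ℝ} (hu : ContDiff ℝ 2 u) (hw : ContDiff ℝ 2 w)
    (z : E) :
    wLap ρ (fun y => u y * w y) z =
      u z * wLap ρ w z + w z * wLap ρ u z + 2 * ⟪gradient u z, gradient w z⟫ := by
  simp only [wLap_eq_eLap_sub_fderiv, eLap_mul_s7 hu hw,
    fderiv_mul_apply (hu.differentiable (by norm_num) z) (hw.differentiable (by norm_num) z)]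
  ring

lemma carre_wLap (ρ : E → ℝ) {u w : E → ℝ} (hu : ContDiff ℝ 2 u) (hw : ContDiff ℝ 2 w)
    (z : E) : carre (wLap ρ) u w z = ⟪gradient u z, gradient w z⟫ := by
  rw [carre, wLap_mul ρ hu hw]
  ring

lemma wLap_const (ρ : E → ℝ) (k : ℝ) (z : E) : wLap ρ (fun _ => k) z = 0 := by
  simp [wLap, eLap]

lemma eLap_inner_add_const (v : E) (c : ℝ) (z : E) : eLap (fun w => ⟪v, w⟫ + c) z = 0 := by
  simp only [eLap, fderiv_inner_add_const, fderiv_fun_const]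
  simp

lemma wLap_inner_add_const (ρ : E → ℝ) (v : E) (c : ℝ) (z : E) :
    wLap ρ (fun w => ⟪v, w⟫ + c) z = -fderiv ℝ ρ z v := by
  rw [wLap, eLap_inner_add_const, gradient_inner_add_const, inner_gradient_left, zero_sub]

lemma fderiv_fderiv_apply_eq_sum_hess {ρ : E → ℝ} (hρ : ContDiff ℝ 2 ρ) (x v w : E) :
    fderiv ℝ (fun z => fderiv ℝ ρ z v) x w = ∑ i, ∑ j, hess ρ x i j * w i * v j := by
  have hpartial (j : Fin n) := differentiable_fderiv_apply hρ (EuclideanSpace.single j 1) x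
  have hexpand : (fun z => fderiv ℝ ρ z v) =
      fun z => ∑ j, v j * fderiv ℝ ρ z (EuclideanSpace.single j 1) :=
    funext fun z => (fderiv ℝ ρ z).apply_eq_sum_single v
  rw [hexpand, fderiv_fun_sum fun j _ => (hpartial j).const_mul _, sum_apply, Finset.sum_comm]
  refine Finset.sum_congr rfl fun j _ => ?_
  rw [fderiv_const_mul (hpartial j), smul_apply, smul_eq_mul,
    ContinuousLinearMap.apply_eq_sum_single, Finset.mul_sum]
  exact Finset.sum_congr rfl fun i _ => by rw [hess]; ring

lemma testFn_eq_inner_add_const (x y : E) :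
    testFn x y = fun z => ⟪y - x, z⟫ + (dist x y ^ 2 + ‖x‖ ^ 2 - ‖y‖ ^ 2) / 2 := by
  funext z
  rw [testFn, dist_eq_norm y z, dist_eq_norm z x, norm_sub_sq_real, norm_sub_sq_real,
    inner_sub_left, real_inner_comm z x]
  ring

end WeightedLaplacian

/-- For a C³ weight `ρ`, the coarse Ricci curvature of the weighted
Laplacian is `Ric_{Δ_ρ}(x,y) = Hess ρ_x(y−x, y−x)` for all `x, y ∈ ℝⁿ`. -/
theorem coarse_ricci_of_weighted_laplacian_eq_hessian
    {n : ℕ} (ρ : EuclideanSpace ℝ (Fin n) → ℝ) (hρ : ContDiff ℝ 3 ρ)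
    (x y : EuclideanSpace ℝ (Fin n)) :
    cRic (wLap ρ) x y = ∑ i, ∑ j, hess ρ x i j * (y - x) i * (y - x) j := by
  set v := y - x
  set f := fun z => ⟪v, z⟫ + (dist x y ^ 2 + ‖x‖ ^ 2 - ‖y‖ ^ 2) / 2
  have hf : ContDiff ℝ 2 f := (innerSL ℝ v).contDiff.add contDiff_const
  have hLf : wLap ρ f = fun z => -fderiv ℝ ρ z v := funext (wLap_inner_add_const ρ v _)
  have hLf_smooth : ContDiff ℝ 2 (wLap ρ f) :=
    hLf ▸ ((hρ.fderiv_right (m := 2) (by norm_num)).clm_apply contDiff_const).neg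
  have hΓff : carre (wLap ρ) f f = fun _ => ⟪v, v⟫ :=
    funext fun z => by rw [carre_wLap ρ hf hf, gradient_inner_add_const]
  rw [cRic, testFn_eq_inner_add_const, gamma2, hΓff, wLap_const, carre_wLap ρ hLf_smooth hf,
    gradient_inner_add_const, inner_gradient_left, hLf, fderiv_fun_neg, neg_apply,
    fderiv_fderiv_apply_eq_sum_hess (hρ.of_le (by norm_num))]
  ring
end
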